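/- Let τ be in the Siegel upper half-space ℍ₂ and suppose the theta constants Θᵢ = Θᵢ(0) at the doubled period matrix satisfy Θ₁²Θ₂² − Θ₃²Θ₄² ≠ 0, Θ₁²Θ₃² − Θ₂²Θ₄² ≠ 0, and Θ₁²Θ₄² − Θ₂²Θ₃² ≠ 0. Define A = (Θ₁⁴ − Θ₂⁴ − Θ₃⁴ + Θ₄⁴)/(Θ₁²Θ₄² − Θ₂²Θ₃²), B = (Θ₁⁴ + Θ₂⁴ − Θ₃⁴ − Θ₄⁴)/(Θ₁²Θ₂² − Θ₃²Θ₄²), C = (Θ₁⁴ − Θ₂⁴ + Θ₃⁴ − Θ₄⁴)/(Θ₁²Θ₃² − Θ₂²Θ₄²), and D = Θ₁Θ₂Θ₃Θ₄·∏_{ε,ε'∈{±1}}(Θ₁² + εΘ₂² + ε'Θ₃² + εε'Θ₄²)/((Θ₁²Θ₂² − Θ₃²Θ₄²)(Θ₁²Θ₃² − Θ₂²Θ₄²)(Θ₁²Θ₄² − Θ₂²Θ₃²)). Then for every z ∈ ℂ², setting w = Θ₁(2z), x = Θ₂(2z), y = Θ₃(2z), z' = Θ₄(2z), one has w⁴ +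 x⁴ + y⁴ + z'⁴ + 2Dwxyz' − A(w²z'² + x²y²) − B(w²x² + y²z'²) − C(w²y² + x²z'²) = 0. -/

import Mathlib

open scoped BigOperators

/-- Genus-two theta function with characteristic vectors `a`, `b`. -/
noncomputable def thetaFn (a b : Fin 2 → ℝ) (z : Fin 2 → ℂ) (τ : Matrix (Fin 2) (Fin 2) ℂ) : ℂ :=
  ∑' u : Fin 2 → ℤ,
    Complex.exp ((Real.pi : ℂ) * Complex.I *
      ((∑ i, ∑ j, ((u i : ℂ) + (a i : ℂ)) * τ i j * ((u j : ℂ) + (a j : ℂ))) +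
        2 * ∑ i, ((u i : ℂ) + (a i : ℂ)) * (z i + (b i : ℂ))))

/-- The sixteen theta characteristics `[(a₁,a₂);(b₁,b₂)]`, 0-indexed: entry `i` is θ_{i+1}. -/
def thetaChars : Fin 16 → (ℝ × ℝ) × (ℝ × ℝ) :=
  ![((0,0),(0,0)), ((0,0),(1,1)), ((0,0),(1,0)), ((0,0),(0,1)),
    ((1,0),(0,0)), ((1,0),(0,1)), ((0,1),(0,0)), ((1,1),(0,0)),
    ((0,1),(1,0)), ((1,1),(1,1)), ((0,1),(0,1)), ((0,1),(1,1)),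
    ((1,1),(0,1)), ((1,0),(1,0)), ((1,0),(1,1)), ((1,1),(1,0))]

/-- `th i z τ` is the theta function θ_{i+1}(z, τ). -/
noncomputable def th (i : Fin 16) (z : Fin 2 → ℂ) (τ : Matrix (Fin 2) (Fin 2) ℂ) : ℂ :=
  thetaFn ![(thetaChars i).1.1 / 2, (thetaChars i).1.2 / 2]
          ![(thetaChars i).2.1 / 2, (thetaChars i).2.2 / 2] z τ

/-- Membership in the Siegel upper half-space ℍ₂. -/
def IsSiegel (τ : Matrix (Fin 2) (Fin 2) ℂ) : Prop :=
  τ 0 1 = τ 1 0 ∧ 0 < (τ 1 1).im ∧ (τ 0 1).im ^ 2 < (τ 0 0).im * (τ 1 1).im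


/-- `Th i z τ` is the theta function Θ_{i+1}(z), with the characteristic of θ_{i+1}
swapped, evaluated at `(z, 2τ)`. -/
noncomputable def Th (i : Fin 16) (z : Fin 2 → ℂ) (τ : Matrix (Fin 2) (Fin 2) ℂ) : ℂ :=
  thetaFn ![(thetaChars i).2.1 / 2, (thetaChars i).2.2 / 2]
          ![(thetaChars i).1.1 / 2, (thetaChars i).1.2 / 2] z (2 • τ)

/-!
The addition formula `θ[a;b](x) θ[a;b](y) = ∑ₑ ± Θ[a+e](x+y) Θ[e](x-y)` expresses
products of theta functions at `τ` through the second-order theta functions `Θ` at `2τ`.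
Writing `(θ(2z) θ(0))² = θ(2z)² θ(0)²` for each of the ten even characteristics gives ten
quadratic relations between `Θ(2z)`, `Θ(4z)` and `Θ(0)`. The formulas for `A, B, C, D` make
the point of theta constants `Θ(0)` a singular point of the quartic, and this is what allows
the `Θ(4z)` terms to be eliminated from a linear combination of the ten relations, leaving
the quartic in `Θ(2z)`.
-/

section Algebra

variable {K : Type*} [Field K]

def goepelHudsonQuartic (A B C D w x y t : K) : K :=
  w ^ 4 + x ^ 4 + y ^ 4 + t ^ 4 + 2 * D * w * x * y * t - A * (w ^ 2 * t ^ 2 + x ^ 2 * y ^ 2)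
    - B * (w ^ 2 * x ^ 2 + y ^ 2 * t ^ 2) - C * (w ^ 2 * y ^ 2 + x ^ 2 * t ^ 2)

/-- The halved partial derivatives of `goepelHudsonQuartic A B C D` vanish at `(p, q, r, s)`. -/
def IsGoepelHudsonSingular (A B C D p q r s : K) : Prop :=
  2 * p ^ 3 + D * q * r * s - A * p * s ^ 2 - B * p * q ^ 2 - C * p * r ^ 2 = 0 ∧
  2 * q ^ 3 + D * p * r * s - A * q * r ^ 2 - B * q * p ^ 2 - C * q * s ^ 2 = 0 ∧
  2 * r ^ 3 + D * p * q * s - A * r * q ^ 2 - B * r * s ^ 2 - C * r * p ^ 2 = 0 ∧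
  2 * s ^ 3 + D * p * q * r - A * s * p ^ 2 - B * s * r ^ 2 - C * s * q ^ 2 = 0

theorem isGoepelHudsonSingular_of_moduli {p q r s A B C D : K}
    (h1 : p ^ 2 * q ^ 2 - r ^ 2 * s ^ 2 ≠ 0) (h2 : p ^ 2 * r ^ 2 - q ^ 2 * s ^ 2 ≠ 0)
    (h3 : p ^ 2 * s ^ 2 - q ^ 2 * r ^ 2 ≠ 0)
    (hA : A = (p ^ 4 - q ^ 4 - r ^ 4 + s ^ 4) / (p ^ 2 * s ^ 2 - q ^ 2 * r ^ 2))
    (hB : B = (p ^ 4 + q ^ 4 - r ^ 4 - s ^ 4) / (p ^ 2 * q ^ 2 - r ^ 2 * s ^ 2))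
    (hC : C = (p ^ 4 - q ^ 4 + r ^ 4 - s ^ 4) / (p ^ 2 * r ^ 2 - q ^ 2 * s ^ 2))
    (hD : D = p * q * r * s *
      ((p ^ 2 + q ^ 2 + r ^ 2 + s ^ 2) * (p ^ 2 + q ^ 2 - r ^ 2 - s ^ 2) *
        (p ^ 2 - q ^ 2 + r ^ 2 - s ^ 2) * (p ^ 2 - q ^ 2 - r ^ 2 + s ^ 2)) /
      ((p ^ 2 * q ^ 2 - r ^ 2 * s ^ 2) * (p ^ 2 * r ^ 2 - q ^ 2 * s ^ 2) *
        (p ^ 2 * s ^ 2 - q ^ 2 * r ^ 2))) :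
    IsGoepelHudsonSingular A B C D p q r s := by
  set dB := p ^ 2 * q ^ 2 - r ^ 2 * s ^ 2
  set dC := p ^ 2 * r ^ 2 - q ^ 2 * s ^ 2
  set dA := p ^ 2 * s ^ 2 - q ^ 2 * r ^ 2
  set nD := p * q * r * s *
    ((p ^ 2 + q ^ 2 + r ^ 2 + s ^ 2) * (p ^ 2 + q ^ 2 - r ^ 2 - s ^ 2) *
      (p ^ 2 - q ^ 2 + r ^ 2 - s ^ 2) * (p ^ 2 - q ^ 2 - r ^ 2 + s ^ 2))
  have hden : dB * dC * dA ≠ 0 := mul_ne_zero (mul_ne_zero h1 h2) h3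
  have eA : A * dA = p ^ 4 - q ^ 4 - r ^ 4 + s ^ 4 := by rw [hA, div_mul_cancel₀ _ h3]
  have eB : B * dB = p ^ 4 + q ^ 4 - r ^ 4 - s ^ 4 := by rw [hB, div_mul_cancel₀ _ h1]
  have eC : C * dC = p ^ 4 - q ^ 4 + r ^ 4 - s ^ 4 := by rw [hC, div_mul_cancel₀ _ h2]
  have eD : D * (dB * dC * dA) = nD := by rw [hD, div_mul_cancel₀ _ hden]
  refine ⟨?_, ?_, ?_, ?_⟩ <;> refine (mul_eq_zero.mp ?_).resolve_right hden
  · linear_combination q * r * s * eD - p * s ^ 2 * dB * dC * eA - p * q ^ 2 * dC * dA * eB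
      - p * r ^ 2 * dB * dA * eC
  · linear_combination p * r * s * eD - q * r ^ 2 * dB * dC * eA - q * p ^ 2 * dC * dA * eB
      - q * s ^ 2 * dB * dA * eC
  · linear_combination p * q * s * eD - r * q ^ 2 * dB * dC * eA - r * s ^ 2 * dC * dA * eB
      - r * p ^ 2 * dB * dA * eC
  · linear_combination p * q * r * eD - s * p ^ 2 * dB * dC * eA - s * r ^ 2 * dC * dA * eB
      - s * q ^ 2 * dB * dA * eC

theorem goepelHudsonQuartic_eq_zero_of_relations [CharZero K]
    {p q r s w x y t W X Y T A B C D : K}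
    (R₁ : (w ^ 2 + x ^ 2 + y ^ 2 + t ^ 2) ^ 2 =
      (p * W + q * X + r * Y + s * T) * (p ^ 2 + q ^ 2 + r ^ 2 + s ^ 2))
    (R₂ : (w ^ 2 + x ^ 2 - y ^ 2 - t ^ 2) ^ 2 =
      (p * W + q * X - r * Y - s * T) * (p ^ 2 + q ^ 2 - r ^ 2 - s ^ 2))
    (R₃ : (w ^ 2 - x ^ 2 - y ^ 2 + t ^ 2) ^ 2 =
      (p * W - q * X - r * Y + s * T) * (p ^ 2 - q ^ 2 - r ^ 2 + s ^ 2))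
    (R₄ : (w ^ 2 - x ^ 2 + y ^ 2 - t ^ 2) ^ 2 =
      (p * W - q * X + r * Y - s * T) * (p ^ 2 - q ^ 2 + r ^ 2 - s ^ 2))
    (R₅ : 2 * (w * y + x * t) ^ 2 = (r * W + s * X + p * Y + q * T) * (p * r + q * s))
    (R₆ : 2 * (w * y - x * t) ^ 2 = (r * W - s * X + p * Y - q * T) * (p * r - q * s))
    (R₇ : 2 * (w * t + x * y) ^ 2 = (s * W + r * X + q * Y + p * T) * (p * s + q * r))
    (R₈ : 2 * (w * x + y * t) ^ 2 = (q * W + p * X + s * Y + r * T) * (p * q + r * s))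
    (R₉ : 2 * (w * t - x * y) ^ 2 = (s * W - r * X - q * Y + p * T) * (p * s - q * r))
    (R₁₀ : 2 * (w * x - y * t) ^ 2 = (q * W + p * X - s * Y - r * T) * (p * q - r * s))
    (hsing : IsGoepelHudsonSingular A B C D p q r s) :
    goepelHudsonQuartic A B C D w x y t = 0 := by
  obtain ⟨Np, Nq, Nr, Ns⟩ := hsing
  unfold goepelHudsonQuartic
  linear_combination (R₁ + R₂ + R₃ + R₄) / 4 - C / 4 * (R₅ + R₆) - A / 4 * (R₇ + R₉)
    + (D - B) / 4 * R₈ - (D + B) / 4 * R₁₀ + W / 2 * Np + X / 2 * Nq + Y / 2 * Nr + T / 2 * Ns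

end Algebra

section Theta

open Complex Real

noncomputable def thetaTerm (a b : Fin 2 → ℝ) (z : Fin 2 → ℂ) (τ : Matrix (Fin 2) (Fin 2) ℂ)
    (u : Fin 2 → ℤ) : ℂ :=
  cexp (π * I * ((∑ i, ∑ j, ((u i : ℂ) + a i) * τ i j * ((u j : ℂ) + a j)) +
    2 * ∑ i, ((u i : ℂ) + a i) * (z i + b i)))

theorem thetaFn_eq_tsum (a b : Fin 2 → ℝ) (z : Fin 2 → ℂ) (τ : Matrix (Fin 2) (Fin 2) ℂ) :
    thetaFn a b z τ = ∑' u, thetaTerm a b z τ u := rfl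

theorem IsSiegel.two_smul {τ : Matrix (Fin 2) (Fin 2) ℂ} (hτ : IsSiegel τ) :
    IsSiegel (2 • τ) := by
  obtain ⟨hsymm, h11, hdet⟩ := hτ
  simp only [IsSiegel, Matrix.smul_apply, nsmul_eq_mul, Nat.cast_ofNat, mul_im, re_ofNat,
    im_ofNat, zero_mul, add_zero]
  exact ⟨by rw [hsymm], by linarith, by nlinarith⟩

theorem IsSiegel.exists_pos_mul_le_im_quadForm {τ : Matrix (Fin 2) (Fin 2) ℂ} (hτ : IsSiegel τ) :
    ∃ m > 0, ∀ v₀ v₁ : ℝ, m * (v₀ ^ 2 + v₁ ^ 2) ≤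
      (τ 0 0).im * v₀ ^ 2 + 2 * (τ 0 1).im * v₀ * v₁ + (τ 1 1).im * v₁ ^ 2 := by
  obtain ⟨-, hγ, hdet⟩ := hτ
  have hα : 0 < (τ 0 0).im := by nlinarith [sq_nonneg (τ 0 1).im]
  -- `det / trace` bounds the smallest eigenvalue from below
  refine ⟨((τ 0 0).im * (τ 1 1).im - (τ 0 1).im ^ 2) / ((τ 0 0).im + (τ 1 1).im),
    div_pos (by linarith) (by linarith), fun v₀ v₁ ↦ ?_⟩
  rw [div_mul_eq_mul_div, div_le_iff₀ (by linarith)]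
  nlinarith [sq_nonneg ((τ 0 0).im * v₀ + (τ 0 1).im * v₁),
    sq_nonneg ((τ 0 1).im * v₀ + (τ 1 1).im * v₁)]

theorem summable_exp_shifted_gaussian {m : ℝ} (hm : 0 < m) (a w : ℝ) :
    Summable fun n : ℤ ↦ Real.exp (-π * (m * (n + a) ^ 2 + 2 * (n + a) * w)) := by
  have h := ((summable_jacobiTheta₂_term_iff (I * (m * a + w : ℝ)) (I * m)).mpr
    (by simpa using hm)).norm.mul_left (Real.exp (-π * (m * a ^ 2 + 2 * a * w)))
  refine h.congr fun n ↦ ?_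
  rw [norm_jacobiTheta₂_term, ← Real.exp_add]
  congr 1
  simp only [mul_im, I_re, I_im, ofReal_re, ofReal_im]
  ring

theorem norm_thetaTerm (a b : Fin 2 → ℝ) (z : Fin 2 → ℂ) {τ : Matrix (Fin 2) (Fin 2) ℂ}
    (hsymm : τ 0 1 = τ 1 0) (u : Fin 2 → ℤ) :
    ‖thetaTerm a b z τ u‖ = Real.exp (-π *
      (((τ 0 0).im * (u 0 + a 0) ^ 2 + 2 * (τ 0 1).im * (u 0 + a 0) * (u 1 + a 1) +
        (τ 1 1).im * (u 1 + a 1) ^ 2) +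
      2 * ((u 0 + a 0) * (z 0).im + (u 1 + a 1) * (z 1).im))) := by
  have hv : ∀ i, (u i : ℂ) + a i = ((u i + a i : ℝ) : ℂ) := fun i ↦ by push_cast; rfl
  rw [thetaTerm, Complex.norm_exp]
  congr 1
  simp only [Fin.sum_univ_two, hv, ← hsymm, mul_re, mul_im, add_re, add_im, I_re, I_im,
    ofReal_re, ofReal_im, re_ofNat, im_ofNat]
  ring

theorem summable_norm_thetaTerm (a b : Fin 2 → ℝ) (z : Fin 2 → ℂ)
    {τ : Matrix (Fin 2) (Fin 2) ℂ} (hτ : IsSiegel τ) :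
    Summable fun u ↦ ‖thetaTerm a b z τ u‖ := by
  obtain ⟨m, hm, hquad⟩ := hτ.exists_pos_mul_le_im_quadForm
  have g (i : Fin 2) := summable_exp_shifted_gaussian hm (a i) (z i).im
  have hprod := ((g 0).mul_of_nonneg (g 1) (fun _ ↦ (Real.exp_pos _).le)
    (fun _ ↦ (Real.exp_pos _).le)).comp_injective (finTwoArrowEquiv ℤ).injective
  refine Summable.of_nonneg_of_le (fun _ ↦ norm_nonneg _) (fun u ↦ ?_) hprod
  rw [norm_thetaTerm a b z hτ.1, Function.comp_apply, ← Real.exp_add, Real.exp_le_exp]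
  have := mul_le_mul_of_nonneg_left (hquad (u 0 + a 0) (u 1 + a 1)) Real.pi_pos.le
  change _ ≤ -π * (m * (u 0 + a 0) ^ 2 + 2 * (u 0 + a 0) * (z 0).im) +
    -π * (m * (u 1 + a 1) ^ 2 + 2 * (u 1 + a 1) * (z 1).im)
  linarith

noncomputable def thetaHalf (τ : Matrix (Fin 2) (Fin 2) ℂ) (a₀ a₁ b₀ b₁ : ℤ) (z : Fin 2 → ℂ) : ℂ :=
  thetaFn ![(a₀ : ℝ) / 2, (a₁ : ℝ) / 2] ![(b₀ : ℝ) / 2, (b₁ : ℝ) / 2] z τ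

noncomputable def secondOrderTheta (τ : Matrix (Fin 2) (Fin 2) ℂ) (c₀ c₁ : ℤ) (w : Fin 2 → ℂ) :
    ℂ :=
  thetaFn ![(c₀ : ℝ) / 2, (c₁ : ℝ) / 2] 0 w (2 • τ)

theorem Bool.toInt_decide_emod_two_eq_one (r : ℤ) : (decide (r % 2 = 1)).toInt = r % 2 := by
  rcases Int.emod_two_eq_zero_or_one r with h | h <;> simp [h]

/-- The change of summation variables `m = k + l + e`, `n = k - l` behind the addition formula;
`e ∈ {0, 1}²` is the parity of `m - n`. -/
def sumDiffEquiv : (Bool × Bool) × (Fin 2 → ℤ) × (Fin 2 → ℤ) ≃ (Fin 2 → ℤ) × (Fin 2 → ℤ) where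
  toFun p := (![p.2.1 0 + p.2.2 0 + p.1.1.toInt, p.2.1 1 + p.2.2 1 + p.1.2.toInt], p.2.1 - p.2.2)
  invFun q := ((decide ((q.1 0 - q.2 0) % 2 = 1), decide ((q.1 1 - q.2 1) % 2 = 1)),
    (q.2 + ![(q.1 0 - q.2 0) / 2, (q.1 1 - q.2 1) / 2],
      ![(q.1 0 - q.2 0) / 2, (q.1 1 - q.2 1) / 2]))
  left_inv := by
    rintro ⟨⟨e₀, e₁⟩, k, l⟩
    refine Prod.ext (Prod.ext ?_ ?_) (Prod.ext (funext fun i ↦ ?_) (funext fun i ↦ ?_))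
    all_goals (try fin_cases i) <;> cases e₀ <;> cases e₁ <;> simp <;>
      first | omega | exact decide_eq_true (by omega)
  right_inv := by
    rintro ⟨m, n⟩
    ext i <;> fin_cases i <;>
      simp [Bool.toInt_decide_emod_two_eq_one, Matrix.vecHead, Matrix.vecTail] <;> omega

/-- By the parallelogram law, `(m + a/2) τ (m + a/2) + (n + a/2) τ (n + a/2)` equals
`(k + (a + e)/2) (2τ) (k + (a + e)/2) + (l + e/2) (2τ) (l + e/2)`. -/
theorem thetaTerm_mul_thetaTerm (τ : Matrix (Fin 2) (Fin 2) ℂ) (a₀ a₁ b₀ b₁ e₀ e₁ : ℤ)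
    (x y : Fin 2 → ℂ) (k l : Fin 2 → ℤ) :
    thetaTerm ![(a₀ : ℝ) / 2, (a₁ : ℝ) / 2] ![(b₀ : ℝ) / 2, (b₁ : ℝ) / 2] x τ
        ![k 0 + l 0 + e₀, k 1 + l 1 + e₁] *
      thetaTerm ![(a₀ : ℝ) / 2, (a₁ : ℝ) / 2] ![(b₀ : ℝ) / 2, (b₁ : ℝ) / 2] y τ (k - l) =
    (-1 : ℂ) ^ ((a₀ + e₀) * b₀ + (a₁ + e₁) * b₁) *
      (thetaTerm ![((a₀ + e₀ : ℤ) : ℝ) / 2, ((a₁ + e₁ : ℤ) : ℝ) / 2] 0 (x + y) (2 • τ) k *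
        thetaTerm ![(e₀ : ℝ) / 2, (e₁ : ℝ) / 2] 0 (x - y) (2 • τ) l) := by
  rw [← Complex.exp_pi_mul_I, ← Complex.exp_int_mul]
  simp only [thetaTerm, ← Complex.exp_add]
  refine Complex.exp_eq_exp_iff_exists_int.mpr ⟨k 0 * b₀ + k 1 * b₁, ?_⟩
  simp only [Fin.sum_univ_two, Matrix.cons_val_zero, Matrix.cons_val_one, Pi.sub_apply,
    Pi.add_apply, Pi.zero_apply, Matrix.smul_apply, nsmul_eq_mul]
  push_cast
  ring

theorem tsum_thetaTerm_mul_thetaTerm {τ : Matrix (Fin 2) (Fin 2) ℂ} (hτ : IsSiegel τ)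
    (a₀ a₁ b₀ b₁ e₀ e₁ : ℤ) (x y : Fin 2 → ℂ) :
    ∑' kl : (Fin 2 → ℤ) × (Fin 2 → ℤ),
      thetaTerm ![(a₀ : ℝ) / 2, (a₁ : ℝ) / 2] ![(b₀ : ℝ) / 2, (b₁ : ℝ) / 2] x τ
          ![kl.1 0 + kl.2 0 + e₀, kl.1 1 + kl.2 1 + e₁] *
        thetaTerm ![(a₀ : ℝ) / 2, (a₁ : ℝ) / 2] ![(b₀ : ℝ) / 2, (b₁ : ℝ) / 2] y τ (kl.1 - kl.2) =
    (-1 : ℂ) ^ ((a₀ + e₀) * b₀ + (a₁ + e₁) * b₁) *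
      secondOrderTheta τ (a₀ + e₀) (a₁ + e₁) (x + y) * secondOrderTheta τ e₀ e₁ (x - y) := by
  simp only [thetaTerm_mul_thetaTerm, secondOrderTheta, thetaFn_eq_tsum, mul_assoc]
  rw [tsum_mul_left, tsum_mul_tsum_of_summable_norm (summable_norm_thetaTerm _ _ _ hτ.two_smul)
    (summable_norm_thetaTerm _ _ _ hτ.two_smul)]

theorem thetaHalf_mul_thetaHalf {τ : Matrix (Fin 2) (Fin 2) ℂ} (hτ : IsSiegel τ)
    (a₀ a₁ b₀ b₁ : ℤ) (x y : Fin 2 → ℂ) :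
    thetaHalf τ a₀ a₁ b₀ b₁ x * thetaHalf τ a₀ a₁ b₀ b₁ y =
      (-1 : ℂ) ^ (a₀ * b₀ + a₁ * b₁) *
          secondOrderTheta τ a₀ a₁ (x + y) * secondOrderTheta τ 0 0 (x - y) +
        (-1 : ℂ) ^ ((a₀ + 1) * b₀ + (a₁ + 1) * b₁) *
          secondOrderTheta τ (a₀ + 1) (a₁ + 1) (x + y) * secondOrderTheta τ 1 1 (x - y) +
        (-1 : ℂ) ^ ((a₀ + 1) * b₀ + a₁ * b₁) *
          secondOrderTheta τ (a₀ + 1) a₁ (x + y) * secondOrderTheta τ 1 0 (x - y) +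
        (-1 : ℂ) ^ (a₀ * b₀ + (a₁ + 1) * b₁) *
          secondOrderTheta τ a₀ (a₁ + 1) (x + y) * secondOrderTheta τ 0 1 (x - y) := by
  have hx := summable_norm_thetaTerm ![(a₀ : ℝ) / 2, (a₁ : ℝ) / 2] ![(b₀ : ℝ) / 2, (b₁ : ℝ) / 2]
    x hτ
  have hy := summable_norm_thetaTerm ![(a₀ : ℝ) / 2, (a₁ : ℝ) / 2] ![(b₀ : ℝ) / 2, (b₁ : ℝ) / 2]
    y hτ
  have hsum := (Equiv.summable_iff sumDiffEquiv).mpr (summable_mul_of_summable_norm hx hy)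
  rw [Function.comp_def] at hsum
  rw [thetaHalf, thetaHalf, thetaFn_eq_tsum, thetaFn_eq_tsum,
    tsum_mul_tsum_of_summable_norm hx hy, ← Equiv.tsum_eq sumDiffEquiv, hsum.tsum_prod,
    tsum_fintype, Fintype.sum_prod_type, Fintype.sum_bool, Fintype.sum_bool, Fintype.sum_bool]
  simp only [sumDiffEquiv, Equiv.coe_fn_mk, Bool.toInt_true, Bool.toInt_false]
  rw [tsum_thetaTerm_mul_thetaTerm hτ a₀ a₁ b₀ b₁ 1 1,
    tsum_thetaTerm_mul_thetaTerm hτ a₀ a₁ b₀ b₁ 1 0,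
    tsum_thetaTerm_mul_thetaTerm hτ a₀ a₁ b₀ b₁ 0 1,
    tsum_thetaTerm_mul_thetaTerm hτ a₀ a₁ b₀ b₁ 0 0]
  simp only [add_zero]
  ring

theorem secondOrderTheta_add_two_mul (τ : Matrix (Fin 2) (Fin 2) ℂ) (c₀ c₁ k₀ k₁ : ℤ)
    (w : Fin 2 → ℂ) :
    secondOrderTheta τ (c₀ + 2 * k₀) (c₁ + 2 * k₁) w = secondOrderTheta τ c₀ c₁ w := by
  rw [secondOrderTheta, secondOrderTheta, thetaFn_eq_tsum, thetaFn_eq_tsum,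
    ← (Equiv.addRight ![-k₀, -k₁]).tsum_eq]
  refine tsum_congr fun u ↦ congrArg cexp ?_
  simp only [Equiv.coe_addRight, Fin.sum_univ_two, Pi.add_apply, Pi.zero_apply,
    Matrix.cons_val_zero, Matrix.cons_val_one]
  push_cast
  ring

theorem secondOrderTheta_two_left (τ : Matrix (Fin 2) (Fin 2) ℂ) (c : ℤ) (w : Fin 2 → ℂ) :
    secondOrderTheta τ 2 c w = secondOrderTheta τ 0 c w := by
  simpa using secondOrderTheta_add_two_mul τ 0 c 1 0 w

theorem secondOrderTheta_two_right (τ : Matrix (Fin 2) (Fin 2) ℂ) (c : ℤ) (w : Fin 2 → ℂ) :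
    secondOrderTheta τ c 2 w = secondOrderTheta τ c 0 w := by
  simpa using secondOrderTheta_add_two_mul τ c 0 0 1 w

theorem Th_zero (z : Fin 2 → ℂ) (τ : Matrix (Fin 2) (Fin 2) ℂ) :
    Th 0 z τ = secondOrderTheta τ 0 0 z := by
  unfold Th secondOrderTheta; congr 1 <;> funext i <;> fin_cases i <;> simp [thetaChars]

theorem Th_one (z : Fin 2 → ℂ) (τ : Matrix (Fin 2) (Fin 2) ℂ) :
    Th 1 z τ = secondOrderTheta τ 1 1 z := by
  unfold Th secondOrderTheta; congr 1 <;> funext i <;> fin_cases i <;> simp [thetaChars]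

theorem Th_two (z : Fin 2 → ℂ) (τ : Matrix (Fin 2) (Fin 2) ℂ) :
    Th 2 z τ = secondOrderTheta τ 1 0 z := by
  unfold Th secondOrderTheta; congr 1 <;> funext i <;> fin_cases i <;> simp [thetaChars]

theorem Th_three (z : Fin 2 → ℂ) (τ : Matrix (Fin 2) (Fin 2) ℂ) :
    Th 3 z τ = secondOrderTheta τ 0 1 z := by
  unfold Th secondOrderTheta; congr 1 <;> funext i <;> fin_cases i <;> simp [thetaChars]

theorem goepelHudsonQuartic_secondOrderTheta {τ : Matrix (Fin 2) (Fin 2) ℂ} (hτ : IsSiegel τ)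
    {A B C D : ℂ} (hsing : IsGoepelHudsonSingular A B C D (secondOrderTheta τ 0 0 0)
      (secondOrderTheta τ 1 1 0) (secondOrderTheta τ 1 0 0) (secondOrderTheta τ 0 1 0))
    (v : Fin 2 → ℂ) :
    goepelHudsonQuartic A B C D (secondOrderTheta τ 0 0 v) (secondOrderTheta τ 1 1 v)
      (secondOrderTheta τ 1 0 v) (secondOrderTheta τ 0 1 v) = 0 := by
  have R (a₀ a₁ b₀ b₁ : ℤ) : (thetaHalf τ a₀ a₁ b₀ b₁ v * thetaHalf τ a₀ a₁ b₀ b₁ 0) ^ 2 =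
      thetaHalf τ a₀ a₁ b₀ b₁ v * thetaHalf τ a₀ a₁ b₀ b₁ v *
        (thetaHalf τ a₀ a₁ b₀ b₁ 0 * thetaHalf τ a₀ a₁ b₀ b₁ 0) := by
    ring
  -- one relation for each of the ten even characteristics
  have R₁ := R 0 0 0 0
  have R₂ := R 0 0 1 1
  have R₃ := R 0 0 1 0
  have R₄ := R 0 0 0 1
  have R₅ := R 1 0 0 0
  have R₆ := R 1 0 0 1
  have R₇ := R 0 1 0 0
  have R₈ := R 1 1 0 0
  have R₉ := R 0 1 1 0
  have R₁₀ := R 1 1 1 1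
  simp only [thetaHalf_mul_thetaHalf hτ] at R₁ R₂ R₃ R₄ R₅ R₆ R₇ R₈ R₉ R₁₀
  norm_num [secondOrderTheta_two_left, secondOrderTheta_two_right]
    at R₁ R₂ R₃ R₄ R₅ R₆ R₇ R₈ R₉ R₁₀
  exact goepelHudsonQuartic_eq_zero_of_relations (W := secondOrderTheta τ 0 0 (v + v))
    (X := secondOrderTheta τ 1 1 (v + v)) (Y := secondOrderTheta τ 1 0 (v + v))
    (T := secondOrderTheta τ 0 1 (v + v)) (by linear_combination R₁)
    (by linear_combination R₂) (by linear_combination R₃) (by linear_combination R₄)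
    (by linear_combination R₅ / 2) (by linear_combination R₆ / 2) (by linear_combination R₇ / 2)
    (by linear_combination R₈ / 2) (by linear_combination R₉ / 2) (by linear_combination R₁₀ / 2)
    hsing

end Theta

/-- For τ ∈ ℍ₂ with nondegenerate theta constants at the doubled period matrix, the point
`[Θ₁(2z) : Θ₂(2z) : Θ₃(2z) : Θ₄(2z)]` lies on the Göpel–Hudson quartic with moduli
A, B, C, D given by the theta constants Θᵢ = Θᵢ(0). -/
theorem goepel_hudson_quartic_theta (τ : Matrix (Fin 2) (Fin 2) ℂ) (hτ : IsSiegel τ)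
    (h1 : Th 0 0 τ ^ 2 * Th 1 0 τ ^ 2 - Th 2 0 τ ^ 2 * Th 3 0 τ ^ 2 ≠ 0)
    (h2 : Th 0 0 τ ^ 2 * Th 2 0 τ ^ 2 - Th 1 0 τ ^ 2 * Th 3 0 τ ^ 2 ≠ 0)
    (h3 : Th 0 0 τ ^ 2 * Th 3 0 τ ^ 2 - Th 1 0 τ ^ 2 * Th 2 0 τ ^ 2 ≠ 0)
    (A B C D : ℂ)
    (hA : A = (Th 0 0 τ ^ 4 - Th 1 0 τ ^ 4 - Th 2 0 τ ^ 4 + Th 3 0 τ ^ 4) /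
      (Th 0 0 τ ^ 2 * Th 3 0 τ ^ 2 - Th 1 0 τ ^ 2 * Th 2 0 τ ^ 2))
    (hB : B = (Th 0 0 τ ^ 4 + Th 1 0 τ ^ 4 - Th 2 0 τ ^ 4 - Th 3 0 τ ^ 4) /
      (Th 0 0 τ ^ 2 * Th 1 0 τ ^ 2 - Th 2 0 τ ^ 2 * Th 3 0 τ ^ 2))
    (hC : C = (Th 0 0 τ ^ 4 - Th 1 0 τ ^ 4 + Th 2 0 τ ^ 4 - Th 3 0 τ ^ 4) /
      (Th 0 0 τ ^ 2 * Th 2 0 τ ^ 2 - Th 1 0 τ ^ 2 * Th 3 0 τ ^ 2))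
    (hD : D = Th 0 0 τ * Th 1 0 τ * Th 2 0 τ * Th 3 0 τ *
      ((Th 0 0 τ ^ 2 + Th 1 0 τ ^ 2 + Th 2 0 τ ^ 2 + Th 3 0 τ ^ 2) *
       (Th 0 0 τ ^ 2 + Th 1 0 τ ^ 2 - Th 2 0 τ ^ 2 - Th 3 0 τ ^ 2) *
       (Th 0 0 τ ^ 2 - Th 1 0 τ ^ 2 + Th 2 0 τ ^ 2 - Th 3 0 τ ^ 2) *
       (Th 0 0 τ ^ 2 - Th 1 0 τ ^ 2 - Th 2 0 τ ^ 2 + Th 3 0 τ ^ 2)) /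
      ((Th 0 0 τ ^ 2 * Th 1 0 τ ^ 2 - Th 2 0 τ ^ 2 * Th 3 0 τ ^ 2) *
       (Th 0 0 τ ^ 2 * Th 2 0 τ ^ 2 - Th 1 0 τ ^ 2 * Th 3 0 τ ^ 2) *
       (Th 0 0 τ ^ 2 * Th 3 0 τ ^ 2 - Th 1 0 τ ^ 2 * Th 2 0 τ ^ 2))) :
    ∀ z : Fin 2 → ℂ,
      Th 0 ((2 : ℂ) • z) τ ^ 4 + Th 1 ((2 : ℂ) • z) τ ^ 4
        + Th 2 ((2 : ℂ) • z) τ ^ 4 + Th 3 ((2 : ℂ) • z) τ ^ 4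
        + 2 * D * Th 0 ((2 : ℂ) • z) τ * Th 1 ((2 : ℂ) • z) τ
            * Th 2 ((2 : ℂ) • z) τ * Th 3 ((2 : ℂ) • z) τ
        - A * (Th 0 ((2 : ℂ) • z) τ ^ 2 * Th 3 ((2 : ℂ) • z) τ ^ 2
            + Th 1 ((2 : ℂ) • z) τ ^ 2 * Th 2 ((2 : ℂ) • z) τ ^ 2)
        - B * (Th 0 ((2 : ℂ) • z) τ ^ 2 * Th 1 ((2 : ℂ) • z) τ ^ 2
            + Th 2 ((2 : ℂ) • z) τ ^ 2 * Th 3 ((2 : ℂ) • z) τ ^ 2)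
        - C * (Th 0 ((2 : ℂ) • z) τ ^ 2 * Th 2 ((2 : ℂ) • z) τ ^ 2
            + Th 1 ((2 : ℂ) • z) τ ^ 2 * Th 3 ((2 : ℂ) • z) τ ^ 2) = 0 := by
  intro z
  simp only [Th_zero, Th_one, Th_two, Th_three] at *
  exact goepelHudsonQuartic_secondOrderTheta hτ
    (isGoepelHudsonSingular_of_moduli h1 h2 h3 hA hB hC hD) _
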